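/- arXiv:1812.11311 — 2 statements merged into one kernel-verified Lean document; each statement's English description precedes it below -/
import Mathlib

section
/- Let λ > 0 and let B be a smooth vector field on 𝕋³ with ∇·B = 0 and ∇×B = λB (a Beltrami field), and set J = ∇×B = λB. Then ∇·((∇×J)⊗B + B⊗(∇×J) − ∇(J×B)) − ∇(|J|²/2) = ∇·(J⊗J). In other words, for a stationary Beltrami flow the nonlinearity of the curled Hall equation coincides exactly with the Navier–Stokes nonlinearity of J. -/
open MeasureTheory Real Filter Topology

noncomputable section

/-- Points / vectors in ℝ³. -/
abbrev V3 : Type := Fin 3 → ℝ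
/-- 3×3 real matrices. -/
abbrev M3 : Type := Fin 3 → Fin 3 → ℝ

def vnorm (v : V3) : ℝ := Real.sqrt (∑ i, v i ^ 2)
def mnorm (M : M3) : ℝ := Real.sqrt (∑ i, ∑ j, M i j ^ 2)
def dotp (a b : V3) : ℝ := ∑ i, a i * b i
def cross (a b : V3) : V3 :=
  ![a 1 * b 2 - a 2 * b 1, a 2 * b 0 - a 0 * b 2, a 0 * b 1 - a 1 * b 0]
def tens (a b : V3) : M3 := fun i j => a i * b j
def frob (A B : M3) : ℝ := ∑ i, ∑ j, A i j * B i j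
def Id3 : M3 := fun i j => if i = j then 1 else 0
def symm3 (M : M3) : Prop := ∀ i j, M i j = M j i
def traceless3 (M : M3) : Prop := ∑ i, M i i = 0

/-- Partial derivative in the i-th coordinate direction. -/
def pd (i : Fin 3) (f : V3 → ℝ) (x : V3) : ℝ := fderiv ℝ f x (Pi.single i 1)
def grad (f : V3 → ℝ) (x : V3) : V3 := fun i => pd i f x
def divg (u : V3 → V3) (x : V3) : ℝ := ∑ i, pd i (fun y => u y i) x
def curl (u : V3 → V3) (x : V3) : V3 :=
  ![pd 1 (fun y => u y 2) x - pd 2 (fun y => u y 1) x,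
    pd 2 (fun y => u y 0) x - pd 0 (fun y => u y 2) x,
    pd 0 (fun y => u y 1) x - pd 1 (fun y => u y 0) x]
def lap (f : V3 → ℝ) (x : V3) : ℝ := ∑ i, pd i (fun y => pd i f y) x
def vlap (u : V3 → V3) (x : V3) : V3 := fun j => lap (fun y => u y j) x
/-- Jacobian matrix (∇u)_{ij} = ∂_j u_i. -/
def jacm (u : V3 → V3) (x : V3) : M3 := fun i j => pd j (fun y => u y i) x
/-- Row-wise divergence of a matrix field. -/
def mdiv (M : V3 → M3) (x : V3) : V3 := fun i => ∑ j, pd j (fun y => M y i j) x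

/-- (2π)-periodicity in each coordinate: functions on the torus 𝕋³. -/
def PeriodicS (f : V3 → ℝ) : Prop :=
  ∀ (x : V3) (k : Fin 3 → ℤ), f (fun i => x i + 2 * π * (k i : ℝ)) = f x
def PeriodicVF (u : V3 → V3) : Prop := ∀ j, PeriodicS fun x => u x j
def PeriodicMF (M : V3 → M3) : Prop := ∀ i j, PeriodicS fun x => M x i j

/-- A fundamental domain for the torus 𝕋³ = ℝ³/(2πℤ)³. -/
def T3 : Set V3 := Set.Icc (fun _ => 0) (fun _ => 2 * π)

def LpS (p : ℝ) (f : V3 → ℝ) : ℝ := (∫ x in T3, |f x| ^ p) ^ (1 / p)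
def LpV (p : ℝ) (u : V3 → V3) : ℝ := (∫ x in T3, (vnorm (u x)) ^ p) ^ (1 / p)
def LpM (p : ℝ) (M : V3 → M3) : ℝ := (∫ x in T3, (mnorm (M x)) ^ p) ^ (1 / p)
def L1S (f : V3 → ℝ) : ℝ := ∫ x in T3, |f x|
def L2V (u : V3 → V3) : ℝ := Real.sqrt (∫ x in T3, ∑ i, u x i ^ 2)
def L2M (M : V3 → M3) : ℝ := Real.sqrt (∫ x in T3, ∑ i, ∑ j, M x i j ^ 2)
def W1pV (p : ℝ) (u : V3 → V3) : ℝ := LpV p u + LpM p (jacm u)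
def H1V (u : V3 → V3) : ℝ := L2V u + L2M (jacm u)

/-- componentwise time derivative of a time-dependent vector field -/
def tderivV (F : ℝ → V3 → V3) (t : ℝ) (x : V3) : V3 := fun i => deriv (fun s => F s x i) t
def tderivS (F : ℝ → V3 → ℝ) (t : ℝ) (x : V3) : ℝ := deriv (fun s => F s x) t

def SmoothV (F : ℝ → V3 → V3) : Prop := ContDiff ℝ (⊤ : ℕ∞) fun p : ℝ × V3 => F p.1 p.2
def SmoothS (F : ℝ → V3 → ℝ) : Prop := ContDiff ℝ (⊤ : ℕ∞) fun p : ℝ × V3 => F p.1 p.2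
def SmoothM (F : ℝ → V3 → M3) : Prop := ∀ i j, SmoothS fun t x => F t x i j

/-- The C^N_{x,t} norm on [0,T] × 𝕋³ (sup of all space-time derivatives of order ≤ N). -/
def CnormV (N : ℕ) (T : ℝ) (F : ℝ → V3 → V3) : ℝ :=
  ⨆ j : Fin (N + 1), ⨆ tx : Set.Icc (0:ℝ) T × V3,
    ‖iteratedFDeriv ℝ j (fun p : ℝ × V3 => F p.1 p.2) ((tx.1 : ℝ), tx.2)‖
def CnormS (N : ℕ) (T : ℝ) (F : ℝ → V3 → ℝ) : ℝ :=
  ⨆ j : Fin (N + 1), ⨆ tx : Set.Icc (0:ℝ) T × V3,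
    ‖iteratedFDeriv ℝ j (fun p : ℝ × V3 => F p.1 p.2) ((tx.1 : ℝ), tx.2)‖
def CnormM (N : ℕ) (T : ℝ) (F : ℝ → V3 → M3) : ℝ :=
  ⨆ j : Fin (N + 1), ⨆ tx : Set.Icc (0:ℝ) T × V3,
    ‖iteratedFDeriv ℝ j (fun p : ℝ × V3 => F p.1 p.2) ((tx.1 : ℝ), tx.2)‖

/-- L^∞ in time (on [0,T]) of the spatial L¹ norm. -/
def LinfL1V (T : ℝ) (F : ℝ → V3 → V3) : ℝ :=
  ⨆ t : Set.Icc (0:ℝ) T, ∫ x in T3, vnorm (F (t : ℝ) x)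
def LinfL1M (T : ℝ) (F : ℝ → V3 → M3) : ℝ :=
  ⨆ t : Set.Icc (0:ℝ) T, ∫ x in T3, mnorm (F (t : ℝ) x)

/-- λ_q = a^(b^q) -/
def lamq (a b q : ℕ) : ℝ := (a : ℝ) ^ (b ^ q)
/-- δ_q = λ₁^{3β} λ_q^{-2β} -/
def deltaq (a b : ℕ) (β : ℝ) (q : ℕ) : ℝ :=
  (lamq a b 1) ^ (3 * β) * (lamq a b q) ^ (-(2 * β))

/-- The approximating equation (eq-div-q) for the current density J_q = ∇×B_q:
∂_t J + ∇·((∇×J)⊗B + B⊗(∇×J) − ∇(J×B)) − ∇(|J|²/2) = ΔJ + ∇·R. -/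
def CurlHallApprox (T : ℝ) (B J : ℝ → V3 → V3) (R : ℝ → V3 → M3) : Prop :=
  ∀ t ∈ Set.Icc (0:ℝ) T, ∀ (x : V3) (i : Fin 3),
    tderivV J t x i
      + mdiv (fun y i' j =>
          tens (curl (J t) y) (B t y) i' j + tens (B t y) (curl (J t) y) i' j
            - jacm (fun z => cross (J t z) (B t z)) y i' j) x i
      - grad (fun y => (∑ k, J t y k ^ 2) / 2) x i
    = vlap (J t) x i + mdiv (R t) x i

/-- Decomposition ∇·R = ∇·R̃ + ∇×∇×M̃ + ∇·∇Q̃ + ∇p̃ with R̃ traceless symmetric. -/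
def StressDecompEq (T : ℝ) (R Rt : ℝ → V3 → M3) (Mt Qt : ℝ → V3 → V3)
    (pt : ℝ → V3 → ℝ) : Prop :=
  (∀ t x, symm3 (Rt t x)) ∧ (∀ t x, traceless3 (Rt t x)) ∧
  ∀ t ∈ Set.Icc (0:ℝ) T, ∀ (x : V3) (i : Fin 3),
    mdiv (R t) x i
      = mdiv (Rt t) x i + curl (fun y => curl (Mt t) y) x i + vlap (Qt t) x i
          + grad (pt t) x i

/- complex-valued fields -/
abbrev CV3 : Type := Fin 3 → ℂ
def cpd (i : Fin 3) (f : V3 → ℂ) (x : V3) : ℂ := fderiv ℝ f x (Pi.single i 1)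
def cgrad (f : V3 → ℂ) (x : V3) : CV3 := fun i => cpd i f x
def cdivg (u : V3 → CV3) (x : V3) : ℂ := ∑ i, cpd i (fun y => u y i) x
def ccurl (u : V3 → CV3) (x : V3) : CV3 :=
  ![cpd 1 (fun y => u y 2) x - cpd 2 (fun y => u y 1) x,
    cpd 2 (fun y => u y 0) x - cpd 0 (fun y => u y 2) x,
    cpd 0 (fun y => u y 1) x - cpd 1 (fun y => u y 0) x]
def ccross (a b : CV3) : CV3 :=
  ![a 1 * b 2 - a 2 * b 1, a 2 * b 0 - a 0 * b 2, a 0 * b 1 - a 1 * b 0]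
def ctens (a b : CV3) : Fin 3 → Fin 3 → ℂ := fun i j => a i * b j
def cmdiv (M : V3 → Fin 3 → Fin 3 → ℂ) (x : V3) : CV3 :=
  fun i => ∑ j, cpd j (fun y => M y i j) x

/-- The Beltrami-wave complex amplitude vector B_ξ = (A_ξ + i ξ×A_ξ)/√2. -/
def Bvec (A : V3 → V3) (ξ : V3) : CV3 :=
  fun j => ((A ξ j : ℂ) + Complex.I * ((cross ξ (A ξ)) j : ℝ)) / (Real.sqrt 2 : ℝ)
/-- The Beltrami wave W_ξ(x) = B_ξ e^{iλ ξ·x}. -/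
def Wvec (A : V3 → V3) (lam : ℝ) (ξ : V3) (x : V3) : CV3 :=
  fun j => Bvec A ξ j * Complex.exp (Complex.I * ((lam * dotp ξ x : ℝ) : ℂ))

/-- lattice cube {-r,…,r}³ -/
def cubeIdx (r : ℕ) : Finset (Fin 3 → ℤ) :=
  Fintype.piFinset fun _ => Finset.Icc (-(r : ℤ)) (r : ℤ)
/-- normalized 3D Dirichlet kernel D_r(x) = (2r+1)^{-3/2} Σ_{k∈{-r,…,r}³} e^{ik·x} (real-valued) -/
def Dr (r : ℕ) (x : V3) : ℝ :=
  ((2 * (r : ℝ) + 1) ^ (-(3 : ℝ) / 2)) * ∑ k ∈ cubeIdx r, Real.cos (∑ i, (k i : ℝ) * x i)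


private lemma pd_add' {f g : V3 → ℝ} {x : V3} (hf : DifferentiableAt ℝ f x)
    (hg : DifferentiableAt ℝ g x) (i : Fin 3) :
    pd i (fun y => f y + g y) x = pd i f x + pd i g x := by
  simp [pd, fderiv_fun_add hf hg]

private lemma pd_const_mul' {f : V3 → ℝ} {x : V3} (hf : DifferentiableAt ℝ f x)
    (c : ℝ) (i : Fin 3) :
    pd i (fun y => c * f y) x = c * pd i f x := by
  simp [pd, fderiv_const_mul hf c]

private lemma pd_mul' {f g : V3 → ℝ} {x : V3} (hf : DifferentiableAt ℝ f x)
    (hg : DifferentiableAt ℝ g x) (i : Fin 3) :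
    pd i (fun y => f y * g y) x = f x * pd i g x + g x * pd i f x := by
  simp [pd, fderiv_fun_mul hf hg]

private lemma curl_zero (u : V3 → V3) (y : V3) :
    curl u y 0 = pd 1 (fun z => u z 2) y - pd 2 (fun z => u z 1) y := rfl
private lemma curl_one (u : V3 → V3) (y : V3) :
    curl u y 1 = pd 2 (fun z => u z 0) y - pd 0 (fun z => u z 2) y := rfl
private lemma curl_two (u : V3 → V3) (y : V3) :
    curl u y 2 = pd 0 (fun z => u z 1) y - pd 1 (fun z => u z 0) y := rfl
private lemma cross_zero (a b : V3) : cross a b 0 = a 1 * b 2 - a 2 * b 1 := rfl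
private lemma cross_one (a b : V3) : cross a b 1 = a 2 * b 0 - a 0 * b 2 := rfl
private lemma cross_two (a b : V3) : cross a b 2 = a 0 * b 1 - a 1 * b 0 := rfl

/-- For a smooth Beltrami field B on 𝕋³ (∇·B = 0, ∇×B = λB) and J = ∇×B = λB,
∇·((∇×J)⊗B + B⊗(∇×J) − ∇(J×B)) − ∇(|J|²/2) = ∇·(J⊗J):
for a stationary Beltrami flow the nonlinearity of the curled Hall equation coincides
with the Navier–Stokes nonlinearity of J. -/
theorem beltrami_hall_nonlinearity (lam : ℝ) (hlam : 0 < lam)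
    (B : V3 → V3) (hB : ContDiff ℝ (⊤ : ℕ∞) B)
    (hdiv : ∀ x, divg B x = 0)
    (hBel : ∀ (x : V3) (i : Fin 3), curl B x i = lam * B x i) :
    ∀ (x : V3) (i : Fin 3),
      mdiv (fun y i' j =>
          tens (curl (curl B) y) (B y) i' j
            + tens (B y) (curl (curl B) y) i' j
            - jacm (fun z => cross (curl B z) (B z)) y i' j) x i
        - grad (fun y => (∑ k, curl B y k ^ 2) / 2) x i
      = mdiv (fun y => tens (curl B y) (curl B y)) x i := by
  intro x i
  have hBd : ∀ j : Fin 3, Differentiable ℝ (fun y => B y j) := fun j =>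
    ((contDiff_pi.mp hB j).differentiable (by simp))
  have hJ : ∀ k : Fin 3, (fun y => curl B y k) = fun y => lam * B y k := fun k =>
    funext fun y => hBel y k
  have hpdJ : ∀ (j k : Fin 3) (y : V3),
      pd j (fun z => curl B z k) y = lam * pd j (fun z => B z k) y := by
    intro j k y
    rw [hJ k, pd_const_mul' ((hBd k) y)]
  have hJJ : ∀ (y : V3) (k : Fin 3), curl (curl B) y k = lam ^ 2 * B y k := by
    intro y k
    fin_cases k <;>
      simp only [show (⟨0, by norm_num⟩ : Fin 3) = 0 from rfl,
        show (⟨1, by norm_num⟩ : Fin 3) = 1 from rfl,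
        show (⟨2, by norm_num⟩ : Fin 3) = 2 from rfl]
    · rw [curl_zero, hpdJ, hpdJ]
      have h := hBel y 0; rw [curl_zero] at h
      linear_combination lam * h
    · rw [curl_one, hpdJ, hpdJ]
      have h := hBel y 1; rw [curl_one] at h
      linear_combination lam * h
    · rw [curl_two, hpdJ, hpdJ]
      have h := hBel y 2; rw [curl_two] at h
      linear_combination lam * h
  have hcross0 : ∀ i' : Fin 3, (fun z => cross (curl B z) (B z) i') = fun _ => (0:ℝ) := by
    intro i'; funext z
    fin_cases i' <;>
      simp only [show (⟨0, by norm_num⟩ : Fin 3) = 0 from rfl,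
        show (⟨1, by norm_num⟩ : Fin 3) = 1 from rfl,
        show (⟨2, by norm_num⟩ : Fin 3) = 2 from rfl]
    · rw [cross_zero, hBel, hBel]; ring
    · rw [cross_one, hBel, hBel]; ring
    · rw [cross_two, hBel, hBel]; ring
  have hint : ∀ i' j : Fin 3,
      (fun y => tens (curl (curl B) y) (B y) i' j + tens (B y) (curl (curl B) y) i' j
        - jacm (fun z => cross (curl B z) (B z)) y i' j)
      = fun y => (2 * lam ^ 2) * (B y i' * B y j) := by
    intro i' j; funext y
    have hz : jacm (fun z => cross (curl B z) (B z)) y i' j = 0 := by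
      simp [jacm, hcross0 i', pd]
    simp only [tens, hJJ, hz]
    ring
  have hint2 : ∀ i' j : Fin 3,
      (fun y => tens (curl B y) (curl B y) i' j)
      = fun y => lam ^ 2 * (B y i' * B y j) := by
    intro i' j; funext y
    simp only [tens, hBel]; ring
  have hgradf : (fun y => (∑ k, curl B y k ^ 2) / 2)
      = fun y => (lam ^ 2 / 2) * (B y 0 * B y 0 + (B y 1 * B y 1 + B y 2 * B y 2)) := by
    funext y
    simp only [Fin.sum_univ_three, hBel]; ring
  have hpdprod : ∀ (j k l : Fin 3),
      pd j (fun y => B y k * B y l) x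
        = B x k * pd j (fun y => B y l) x + B x l * pd j (fun y => B y k) x :=
    fun j k l => pd_mul' ((hBd k) x) ((hBd l) x) j
  have hpdc : ∀ (c : ℝ) (j k l : Fin 3),
      pd j (fun y => c * (B y k * B y l)) x
        = c * (B x k * pd j (fun y => B y l) x + B x l * pd j (fun y => B y k) x) := by
    intro c j k l
    rw [pd_const_mul' (((hBd k) x).fun_mul ((hBd l) x)) c, hpdprod]
  have hgrad : grad (fun y => (∑ k, curl B y k ^ 2) / 2) x i
      = (lam ^ 2 / 2) * ((B x 0 * pd i (fun y => B y 0) x + B x 0 * pd i (fun y => B y 0) x)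
        + ((B x 1 * pd i (fun y => B y 1) x + B x 1 * pd i (fun y => B y 1) x)
        + (B x 2 * pd i (fun y => B y 2) x + B x 2 * pd i (fun y => B y 2) x))) := by
    simp only [grad, hgradf]
    rw [pd_const_mul' ((((hBd 0) x).fun_mul ((hBd 0) x)).fun_add
      ((((hBd 1) x).fun_mul ((hBd 1) x)).fun_add (((hBd 2) x).fun_mul ((hBd 2) x))))]
    rw [pd_add' (((hBd 0) x).fun_mul ((hBd 0) x))
      ((((hBd 1) x).fun_mul ((hBd 1) x)).fun_add (((hBd 2) x).fun_mul ((hBd 2) x)))]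
    rw [pd_add' (((hBd 1) x).fun_mul ((hBd 1) x)) (((hBd 2) x).fun_mul ((hBd 2) x))]
    rw [hpdprod, hpdprod, hpdprod]
  have hdivx := hdiv x
  simp only [divg, Fin.sum_univ_three] at hdivx
  have c0 := hBel x 0; rw [curl_zero] at c0
  have c1 := hBel x 1; rw [curl_one] at c1
  have c2 := hBel x 2; rw [curl_two] at c2
  simp only [mdiv]
  rw [hgrad]
  simp only [hint, hint2, hpdc, Fin.sum_univ_three]
  fin_cases i <;>
    simp only [show (⟨0, by norm_num⟩ : Fin 3) = 0 from rfl,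
      show (⟨1, by norm_num⟩ : Fin 3) = 1 from rfl,
      show (⟨2, by norm_num⟩ : Fin 3) = 2 from rfl]
  · linear_combination (lam ^ 2 * B x 0) * hdivx
      + (lam ^ 2 * B x 2) * c1 - (lam ^ 2 * B x 1) * c2
  · linear_combination (lam ^ 2 * B x 1) * hdivx
      + (lam ^ 2 * B x 0) * c2 - (lam ^ 2 * B x 2) * c0
  · linear_combination (lam ^ 2 * B x 2) * hdivx
      + (lam ^ 2 * B x 1) * c0 - (lam ^ 2 * B x 0) * c1
end
end

section
/- Assume a_ξ ∈ ℂ are constants indexed by ξ ∈ Λ_α satisfying conj(a_ξ) = a_{−ξ}. Then the vector field Σ_α Σ_{ξ∈Λ_α} a_ξ 𝕎_ξ(x) is real-valued. Moreover, for each symmetric 3×3 matrix R ∈ B_{ε_γ}(Id): Σ_{ξ∈Λ_α} (γ_ξ(R))² ⨍_{𝕋³} 𝕎_ξ ⊗ 𝕎_{−ξ} dx = Σ_{ξ∈Λ_α} (γ_ξ(R))² B_ξ ⊗ B_{−ξ} = R. -/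
open MeasureTheory Real Filter Topology

noncomputable section

def matBall (ε : ℝ) : Set M3 := {R : M3 | symm3 R ∧ mnorm (R - Id3) ≤ ε}


/-! ### Auxiliary lemmas -/

lemma myCrossNeg (ξ b : V3) (j : Fin 3) : cross (-ξ) b j = -(cross ξ b j) := by
  fin_cases j <;>
    simp [cross, show ((⟨2, by omega⟩ : Fin 3)) = 2 from rfl] <;> ring

lemma myDotpNeg (ξ x : V3) : dotp (-ξ) x = -dotp ξ x := by
  simp [dotp, ← Finset.sum_neg_distrib]

lemma myKey (ξ a : V3) (h1 : ξ 0 ^2 + ξ 1 ^2 + ξ 2 ^2 = 1)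
    (h2 : a 0 ^2 + a 1 ^2 + a 2 ^2 = 1)
    (h3 : a 0 * ξ 0 + a 1 * ξ 1 + a 2 * ξ 2 = 0) (i j : Fin 3) :
    a i * a j + cross ξ a i * cross ξ a j = Id3 i j - ξ i * ξ j := by
  fin_cases i <;> fin_cases j <;>
    simp [cross, Id3, show ((⟨2, by omega⟩ : Fin 3)) = 2 from rfl, Fin.ext_iff]
  · linear_combination (1 - a 0^2)*h1 + (ξ 1^2 + ξ 2^2)*h2 + (ξ 0*a 0 - ξ 1*a 1 - ξ 2*a 2)*h3
  · linear_combination (-(a 0*a 1))*h1 + (-(ξ 0*ξ 1))*h2 + (a 1*ξ 0 + a 0*ξ 1)*h3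
  · linear_combination (-(a 0*a 2))*h1 + (-(ξ 0*ξ 2))*h2 + (a 2*ξ 0 + a 0*ξ 2)*h3
  · linear_combination (-(a 0*a 1))*h1 + (-(ξ 0*ξ 1))*h2 + (a 1*ξ 0 + a 0*ξ 1)*h3
  · linear_combination (1 - a 1^2)*h1 + (ξ 2^2 + ξ 0^2)*h2 + (ξ 1*a 1 - ξ 2*a 2 - ξ 0*a 0)*h3
  · linear_combination (-(a 1*a 2))*h1 + (-(ξ 1*ξ 2))*h2 + (a 2*ξ 1 + a 1*ξ 2)*h3
  · linear_combination (-(a 0*a 2))*h1 + (-(ξ 0*ξ 2))*h2 + (a 2*ξ 0 + a 0*ξ 2)*h3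
  · linear_combination (-(a 1*a 2))*h1 + (-(ξ 1*ξ 2))*h2 + (a 2*ξ 1 + a 1*ξ 2)*h3
  · linear_combination (1 - a 2^2)*h1 + (ξ 0^2 + ξ 1^2)*h2 + (ξ 2*a 2 - ξ 0*a 0 - ξ 1*a 1)*h3

lemma mySumNegReindex {M : Type*} [AddCommMonoid M] (Λ : Finset V3)
    (hΛ : ∀ ξ ∈ Λ, -ξ ∈ Λ) (f : V3 → M) :
    ∑ ξ ∈ Λ, f (-ξ) = ∑ ξ ∈ Λ, f ξ :=
  Finset.sum_equiv (Equiv.neg V3)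
    (fun ξ => ⟨fun h => hΛ ξ h, fun h => by simpa using hΛ (-ξ) h⟩)
    (fun ξ _ => rfl)


/-- for constants a_ξ with conj(a_ξ) = a_{−ξ}, the field Σ_ξ a_ξ 𝕎_ξ is
real-valued, and for R ∈ B_{ε_γ}(Id):
Σ_ξ (γ_ξ(R))² ⨍ 𝕎_ξ ⊗ 𝕎_{−ξ} = Σ_ξ (γ_ξ(R))² B_ξ ⊗ B_{−ξ} = R. -/
theorem intermittent_geometric_lemma
    (Λ : Finset V3) (hΛsym : ∀ ξ ∈ Λ, -ξ ∈ Λ) (hΛS : ∀ ξ ∈ Λ, vnorm ξ = 1)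
    (A : V3 → V3) (hA1 : ∀ ξ ∈ Λ, vnorm (A ξ) = 1)
    (hA2 : ∀ ξ ∈ Λ, dotp (A ξ) ξ = 0) (hA3 : ∀ ξ ∈ Λ, A (-ξ) = A ξ)
    (lam : ℝ) (εγ : ℝ) (hεγ : 0 < εγ)
    (γ : V3 → M3 → ℝ) (hγeven : ∀ ξ ∈ Λ, γ ξ = γ (-ξ))
    (hγdec : ∀ R ∈ matBall εγ, ∀ i j : Fin 3,
      R i j = (1 / 2) * ∑ ξ ∈ Λ, (γ ξ R) ^ 2 * (Id3 i j - ξ i * ξ j))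
    (η : V3 → V3 → ℝ) (hηc : ∀ ξ ∈ Λ, Continuous (η ξ))
    (hηnorm : ∀ ξ ∈ Λ, ∫ x in T3, (η ξ x) ^ 2 = (2 * π) ^ 3)
    (hηeven : ∀ ξ ∈ Λ, η (-ξ) = η ξ)
    (a : V3 → ℂ) (ha : ∀ ξ ∈ Λ, starRingEnd ℂ (a ξ) = a (-ξ)) :
    -- the vector field Σ_ξ a_ξ 𝕎_ξ is real-valued
    (∀ (x : V3) (j : Fin 3),
      (∑ ξ ∈ Λ, a ξ * (η ξ x : ℂ) * Wvec A lam ξ x j).im = 0) ∧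
    -- the geometric identity
    (∀ R ∈ matBall εγ, ∀ i j : Fin 3,
      (∑ ξ ∈ Λ, (((γ ξ R) ^ 2 : ℝ) : ℂ) *
          ((((2 * π) ^ 3 : ℝ) : ℂ)⁻¹ *
            ∫ x in T3,
              ((η ξ x : ℂ) * Wvec A lam ξ x i) * ((η (-ξ) x : ℂ) * Wvec A lam (-ξ) x j))
        = ∑ ξ ∈ Λ, (((γ ξ R) ^ 2 : ℝ) : ℂ) * (Bvec A ξ i * Bvec A (-ξ) j)) ∧
      (∑ ξ ∈ Λ, (((γ ξ R) ^ 2 : ℝ) : ℂ) * (Bvec A ξ i * Bvec A (-ξ) j) = ((R i j : ℝ) : ℂ))) := by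
  have sqrt2C : ((Real.sqrt 2 : ℝ) : ℂ) * ((Real.sqrt 2 : ℝ) : ℂ) = 2 := by
    norm_cast; exact Real.mul_self_sqrt (by norm_num)
  have hC : ∀ ξ ∈ Λ, ∀ j, cross (-ξ) (A (-ξ)) j = -(cross ξ (A ξ) j) := by
    intro ξ hξ j; rw [hA3 ξ hξ, myCrossNeg]
  have hBneg : ∀ ξ ∈ Λ, ∀ j : Fin 3, Bvec A (-ξ) j
      = ((A ξ j : ℂ) - Complex.I * ((cross ξ (A ξ) j : ℝ) : ℂ)) / ((Real.sqrt 2 : ℝ) : ℂ) := by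
    intro ξ hξ j
    unfold Bvec
    rw [hC ξ hξ j, hA3 ξ hξ]
    push_cast
    ring
  have hBconj : ∀ ξ ∈ Λ, ∀ j : Fin 3,
      (starRingEnd ℂ) (Bvec A ξ j) = Bvec A (-ξ) j := by
    intro ξ hξ j
    rw [hBneg ξ hξ j]
    unfold Bvec
    rw [map_div₀, map_add, map_mul, Complex.conj_I, Complex.conj_ofReal, Complex.conj_ofReal,
      Complex.conj_ofReal]
    ring
  have hWconj : ∀ ξ ∈ Λ, ∀ (x : V3) (j : Fin 3),
      (starRingEnd ℂ) (Wvec A lam ξ x j) = Wvec A lam (-ξ) x j := by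
    intro ξ hξ x j
    unfold Wvec
    rw [map_mul, hBconj ξ hξ j, ← Complex.exp_conj]
    congr 1
    rw [map_mul, Complex.conj_I, Complex.conj_ofReal, myDotpNeg]
    push_cast
    ring
  have hWprod : ∀ ξ ∈ Λ, ∀ (x : V3) (i j : Fin 3),
      Wvec A lam ξ x i * Wvec A lam (-ξ) x j = Bvec A ξ i * Bvec A (-ξ) j := by
    intro ξ hξ x i j
    unfold Wvec
    rw [myDotpNeg, mul_mul_mul_comm, ← Complex.exp_add]
    have h0 : Complex.I * ((lam * dotp ξ x : ℝ) : ℂ)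
        + Complex.I * ((lam * -dotp ξ x : ℝ) : ℂ) = 0 := by push_cast; ring
    rw [h0, Complex.exp_zero, mul_one]
  have hprod : ∀ ξ ∈ Λ, ∀ i j : Fin 3, Bvec A ξ i * Bvec A (-ξ) j
      = (((Id3 i j - ξ i * ξ j : ℝ) : ℂ)
          + Complex.I * ((cross ξ (A ξ) i * A ξ j - A ξ i * cross ξ (A ξ) j : ℝ) : ℂ)) / 2 := by
    intro ξ hξ i j
    have h1 : ξ 0 ^ 2 + ξ 1 ^ 2 + ξ 2 ^ 2 = 1 := by
      have := hΛS ξ hξ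
      unfold vnorm at this
      rw [Real.sqrt_eq_one] at this
      simpa [Fin.sum_univ_three] using this
    have h2 : A ξ 0 ^ 2 + A ξ 1 ^ 2 + A ξ 2 ^ 2 = 1 := by
      have := hA1 ξ hξ
      unfold vnorm at this
      rw [Real.sqrt_eq_one] at this
      simpa [Fin.sum_univ_three] using this
    have h3 : A ξ 0 * ξ 0 + A ξ 1 * ξ 1 + A ξ 2 * ξ 2 = 0 := by
      simpa [dotp, Fin.sum_univ_three] using hA2 ξ hξ
    have hkey := myKey ξ (A ξ) h1 h2 h3 i j
    have hkeyC : ((A ξ i * A ξ j + cross ξ (A ξ) i * cross ξ (A ξ) j : ℝ) : ℂ)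
        = ((Id3 i j - ξ i * ξ j : ℝ) : ℂ) := by exact_mod_cast congrArg Complex.ofReal hkey
    rw [hBneg ξ hξ j]
    unfold Bvec
    rw [div_mul_div_comm, sqrt2C, ← hkeyC]
    push_cast
    linear_combination (-(((cross ξ (A ξ) i : ℝ) : ℂ) * ((cross ξ (A ξ) j : ℝ) : ℂ)) / 2)
      * Complex.I_sq
  refine ⟨?_, ?_⟩
  · -- real-valuedness
    intro x j
    rw [← Complex.conj_eq_iff_im, map_sum]
    calc ∑ ξ ∈ Λ, (starRingEnd ℂ) (a ξ * (η ξ x : ℂ) * Wvec A lam ξ x j)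
        = ∑ ξ ∈ Λ, a (-ξ) * (η (-ξ) x : ℂ) * Wvec A lam (-ξ) x j := by
          refine Finset.sum_congr rfl fun ξ hξ => ?_
          rw [map_mul, map_mul, ha ξ hξ, Complex.conj_ofReal, hWconj ξ hξ x j, hηeven ξ hξ]
      _ = ∑ ξ ∈ Λ, a ξ * (η ξ x : ℂ) * Wvec A lam ξ x j :=
          mySumNegReindex Λ hΛsym (fun ξ => a ξ * (η ξ x : ℂ) * Wvec A lam ξ x j)
  · intro R hR i j
    have twopi3 : ((2 * π) ^ 3 : ℝ) ≠ 0 := by positivity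
    constructor
    · -- integral identity
      refine Finset.sum_congr rfl fun ξ hξ => ?_
      congr 1
      have hpt : ∀ x : V3, ((η ξ x : ℂ) * Wvec A lam ξ x i) * ((η (-ξ) x : ℂ) * Wvec A lam (-ξ) x j)
          = ((η ξ x ^ 2 : ℝ) : ℂ) * (Bvec A ξ i * Bvec A (-ξ) j) := by
        intro x
        rw [hηeven ξ hξ, mul_mul_mul_comm, hWprod ξ hξ x i j]
        push_cast
        ring
      have hint : (∫ x in T3, ((η ξ x : ℂ) * Wvec A lam ξ x i) * ((η (-ξ) x : ℂ) * Wvec A lam (-ξ) x j))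
          = (((2 * π) ^ 3 : ℝ) : ℂ) * (Bvec A ξ i * Bvec A (-ξ) j) := by
        calc (∫ x in T3, ((η ξ x : ℂ) * Wvec A lam ξ x i) * ((η (-ξ) x : ℂ) * Wvec A lam (-ξ) x j))
            = ∫ x in T3, ((η ξ x ^ 2 : ℝ) : ℂ) * (Bvec A ξ i * Bvec A (-ξ) j) := by
              exact integral_congr_ae (Filter.Eventually.of_forall fun x => hpt x)
          _ = (∫ x in T3, ((η ξ x ^ 2 : ℝ) : ℂ)) * (Bvec A ξ i * Bvec A (-ξ) j) :=
              integral_mul_const _ _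
          _ = (((∫ x in T3, η ξ x ^ 2 : ℝ)) : ℂ) * (Bvec A ξ i * Bvec A (-ξ) j) := by
              congr 1; exact integral_ofReal
          _ = (((2 * π) ^ 3 : ℝ) : ℂ) * (Bvec A ξ i * Bvec A (-ξ) j) := by
              rw [hηnorm ξ hξ]
      rw [hint, ← mul_assoc, inv_mul_cancel₀ (by exact_mod_cast twopi3), one_mul]
    · -- geometric identity
      have hterm : ∀ ξ ∈ Λ, ((γ ξ R ^ 2 : ℝ) : ℂ) * (Bvec A ξ i * Bvec A (-ξ) j)
          = ((γ ξ R ^ 2 * (Id3 i j - ξ i * ξ j) / 2 : ℝ) : ℂ)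
            + Complex.I * ((γ ξ R ^ 2 *
                (cross ξ (A ξ) i * A ξ j - A ξ i * cross ξ (A ξ) j) / 2 : ℝ) : ℂ) := by
        intro ξ hξ
        rw [hprod ξ hξ i j]
        push_cast
        ring
      rw [Finset.sum_congr rfl hterm, Finset.sum_add_distrib, ← Complex.ofReal_sum,
        ← Finset.mul_sum, ← Complex.ofReal_sum]
      have hre : ∑ ξ ∈ Λ, γ ξ R ^ 2 * (Id3 i j - ξ i * ξ j) / 2 = R i j := by
        rw [hγdec R hR i j, Finset.mul_sum]
        exact Finset.sum_congr rfl fun ξ _ => by ring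
      have him : ∑ ξ ∈ Λ, γ ξ R ^ 2 *
          (cross ξ (A ξ) i * A ξ j - A ξ i * cross ξ (A ξ) j) / 2 = 0 := by
        set f : V3 → ℝ := fun ξ => γ ξ R ^ 2 *
          (cross ξ (A ξ) i * A ξ j - A ξ i * cross ξ (A ξ) j) / 2 with hf
        have hodd : ∀ ξ ∈ Λ, f (-ξ) = -(f ξ) := by
          intro ξ hξ
          simp only [hf]
          rw [hC ξ hξ i, hC ξ hξ j, hA3 ξ hξ, ← hγeven ξ hξ]
          ring
        have : ∑ ξ ∈ Λ, f ξ = -∑ ξ ∈ Λ, f ξ := by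
          calc ∑ ξ ∈ Λ, f ξ = ∑ ξ ∈ Λ, f (-ξ) := (mySumNegReindex Λ hΛsym f).symm
            _ = ∑ ξ ∈ Λ, -(f ξ) := Finset.sum_congr rfl hodd
            _ = -∑ ξ ∈ Λ, f ξ := by rw [Finset.sum_neg_distrib]
        linarith
      rw [hre, him]
      simp
end
end
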